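/- Let i, i' ∈ I be distinct with m = m(i,i') < ∞. Then the roots of the standard rank-2 parabolic subgroup W_{{i,i'}} are exactly the 2m vectors α_{i,i'}(k) = (sin((k+1)π/m)/sin(π/m))·α_i + (sin(kπ/m)/sin(π/m))·α_{i'} for k = 0, 1, …, 2m−1, and the action satisfies s_i α_{i,i'}(k) = α_{i,i'}(m − k) and s_{i'} α_{i,i'}(k) = α_{i,i'}(m − 2 − k) (indices mod 2m). -/

import Mathlib

open scoped Classical

noncomputable section

namespace BKBilliards

variable {I : Type*} [Fintype I] [DecidableEq I]
variable {M : CoxeterMatrix I} {W : Type*} [Group W]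

/-- The simple root indexed by `i`, i.e. the `i`-th standard basis vector of `ℝ^I`. -/
def sroot (i : I) : I → ℝ := Pi.single i 1

/-- The data `(ρ, B)` constitutes the standard geometric representation of the Coxeter
system `cs`, together with its induced symmetric bilinear form (with `μ = 1` on all
pairs whose Coxeter matrix entry is `∞`, encoded as `0`). -/
structure IsGeometric (cs : CoxeterSystem M W) (ρ : Representation ℝ W (I → ℝ))
    (B : LinearMap.BilinForm ℝ (I → ℝ)) : Prop where
  /-- `B(αᵢ, αᵢ') = -cos (π / m i i')` when `m i i' ≠ ∞`. -/
  form_apply_of_ne_zero : ∀ i i' : I, M i i' ≠ 0 →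
    B (sroot i) (sroot i') = - Real.cos (Real.pi / (M i i' : ℝ))
  /-- `B(αᵢ, αᵢ') = -1` when `m i i' = ∞` (encoded as `0`). -/
  form_apply_of_eq_zero : ∀ i i' : I, M i i' = 0 → B (sroot i) (sroot i') = -1
  /-- Each simple reflection acts by the reflection formula. -/
  simple_apply : ∀ (i : I) (v : I → ℝ), ρ (cs.simple i) v = v - (2 * B v (sroot i)) • sroot i

variable (ρ : Representation ℝ W (I → ℝ))

/-- The root system `Φ = {w αᵢ : w ∈ W, i ∈ I}`. -/
def Phi : Set (I → ℝ) := {v | ∃ (w : W) (i : I), v = ρ w (sroot i)}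

/-- The half-space `H_β⁺ = {w ∈ W : w β ∈ Φ⁺}`: for a root `β`, membership amounts to
`w β` being a nonnegative combination of the simple roots. -/
def Hplus (β : I → ℝ) : Set W := {w : W | 0 ≤ ρ w β}

/-- `R(𝓛) = {β ∈ Φ : 𝓛 ⊆ H_β⁺}`. -/
def RL (L : Set W) : Set (I → ℝ) := {β | β ∈ Phi ρ ∧ ∀ w ∈ L, w ∈ Hplus ρ β}

/-- `𝓛` is convex if it equals the intersection of all half-spaces containing it. -/
def IsConvex (L : Set W) : Prop := ∀ u : W, (∀ β ∈ RL ρ L, u ∈ Hplus ρ β) → u ∈ L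

/-- The set of separators of `u`: `Sep(u) = {β ∈ R(𝓛) : u β ∈ Φ⁻}`. -/
def Sep (L : Set W) (u : W) : Set (I → ℝ) := {β | β ∈ RL ρ L ∧ ρ u β ≤ 0}

variable (cs : CoxeterSystem M W)

/-- The noninvertible Bender–Knuth toggle `τᵢ` associated to the convex set `𝓛`. -/
def toggle (L : Set W) (i : I) (u : W) : W :=
  if ρ u⁻¹ (sroot i) ∈ RL ρ L then u else cs.simple i * u

/-- For a word `𝗐 = i_M ⋯ i_1` (a list whose head is `i_M`), the composition
`τ_𝗐 = τ_{i_M} ⋯ τ_{i_1}`. -/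
def toggleWord (L : Set W) (l : List I) (u : W) : W :=
  l.foldr (fun i v => toggle ρ cs L i v) u

/-- `β` dominates `β'` if `H_β⁺ ⊇ H_{β'}⁺`. -/
def Dominates (β β' : I → ℝ) : Prop := Hplus ρ β' ⊆ Hplus ρ β

/-- A small root: a positive root dominating no positive root other than itself. -/
def IsSmall (β : I → ℝ) : Prop :=
  β ∈ Phi ρ ∧ 0 ≤ β ∧ ∀ β', β' ∈ Phi ρ → 0 ≤ β' → Dominates ρ β β' → β' = β

/-- `β` is a transmitting root of the stratum `Str(R)`:
`β ∈ R(𝓛)` and `β = -w⁻¹ αᵢ` for some `w` with `Sep(w) = R` and some `i ∈ I`. -/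
def IsTransmitting (L : Set W) (R : Set (I → ℝ)) (β : I → ℝ) : Prop :=
  β ∈ RL ρ L ∧ ∃ (w : W) (i : I), Sep ρ L w = R ∧ β = - ρ w⁻¹ (sroot i)

end BKBilliards

open BKBilliards

namespace BKBilliards

/-- The vector `α_{i,i'}(k) = (sin((k+1)π/m)/sin(π/m)) αᵢ + (sin(kπ/m)/sin(π/m)) αᵢ'`. -/
def pairRoot {I : Type*} [Fintype I] [DecidableEq I] (i i' : I) (m : ℕ) (k : ℤ) : I → ℝ :=
  (Real.sin (((k : ℝ) + 1) * Real.pi / (m : ℝ)) / Real.sin (Real.pi / (m : ℝ))) • sroot i +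
    (Real.sin ((k : ℝ) * Real.pi / (m : ℝ)) / Real.sin (Real.pi / (m : ℝ))) • sroot i'

/-- The root system of the standard parabolic subgroup `W_{{i,i'}}`. -/
def parabolicPairRoots {I : Type*} [Fintype I] [DecidableEq I] {M : CoxeterMatrix I}
    {W : Type*} [Group W] (cs : CoxeterSystem M W) (ρ : Representation ℝ W (I → ℝ))
    (i i' : I) : Set (I → ℝ) :=
  {v | ∃ w ∈ Subgroup.closure {cs.simple i, cs.simple i'},
    ∃ j ∈ ({i, i'} : Set I), v = ρ w (sroot j)}

end BKBilliards


namespace BKBilliards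

open Real

section Aux

variable {I : Type*} [Fintype I] [DecidableEq I]

private lemma trig1 (m : ℕ) (hm : m ≠ 0) (x : ℝ) :
    Real.sin (((m : ℝ) - x + 1) * π / m) = Real.sin ((x - 1) * π / m) := by
  have hmr : (m : ℝ) ≠ 0 := Nat.cast_ne_zero.mpr hm
  have h : ((m : ℝ) - x + 1) * π / m = π - (x - 1) * π / m := by field_simp; ring
  rw [h, Real.sin_pi_sub]

private lemma trig2 (m : ℕ) (hm : m ≠ 0) (x : ℝ) :
    Real.sin (((m : ℝ) - x) * π / m) = Real.sin (x * π / m) := by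
  have hmr : (m : ℝ) ≠ 0 := Nat.cast_ne_zero.mpr hm
  have h : ((m : ℝ) - x) * π / m = π - x * π / m := by field_simp
  rw [h, Real.sin_pi_sub]

private lemma trig3 (m : ℕ) (x : ℝ) :
    Real.sin ((x + 1) * π / m) - 2 * (Real.sin ((x + 1) * π / m)
      - Real.sin (x * π / m) * Real.cos (π / m)) = Real.sin ((x - 1) * π / m) := by
  have e1 : (x + 1) * π / m = x * π / m + π / m := by ring
  have e2 : (x - 1) * π / m = x * π / m - π / m := by ring
  rw [e1, e2, Real.sin_add, Real.sin_sub]; ring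

private lemma trig4 (m : ℕ) (x : ℝ) :
    Real.sin (x * π / m) - 2 * (Real.sin (x * π / m)
      - Real.sin ((x + 1) * π / m) * Real.cos (π / m)) = Real.sin ((x + 2) * π / m) := by
  have e1 : (x + 1) * π / m = x * π / m + π / m := by ring
  have e2 : (x + 2) * π / m = x * π / m + π / m + π / m := by ring
  rw [e1, e2]
  simp only [Real.sin_add, Real.cos_add]
  linear_combination Real.sin (x * π / m) * Real.sin_sq_add_cos_sq (π / m)

private lemma smul_comb_sub_left (i i' : I) (a b c : ℝ) :
    (a • sroot i + b • sroot i') - c • sroot i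
      = (a - c) • (sroot i : I → ℝ) + b • sroot i' := by
  module

private lemma smul_comb_sub_right (i i' : I) (a b c : ℝ) :
    (a • sroot i + b • sroot i') - c • sroot i'
      = a • (sroot i : I → ℝ) + (b - c) • sroot i' := by
  module

private lemma aux_per (i i' : I) (m : ℕ) (hmfin : m ≠ 0) (k n : ℤ) :
    pairRoot i i' m (k + 2 * (m : ℤ) * n) = pairRoot i i' m k := by
  have hmr : (m : ℝ) ≠ 0 := Nat.cast_ne_zero.mpr hmfin
  have e1 : (((k + 2 * (m : ℤ) * n : ℤ) : ℝ) + 1) * π / m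
      = ((k : ℝ) + 1) * π / m + n * (2 * π) := by push_cast; field_simp; ring
  have e2 : ((k + 2 * (m : ℤ) * n : ℤ) : ℝ) * π / m
      = (k : ℝ) * π / m + n * (2 * π) := by push_cast; field_simp
  simp only [pairRoot, e1, e2, Real.sin_add_int_mul_two_pi]

private lemma aux_p0 (i i' : I) (m : ℕ) (hs : Real.sin (π / m) ≠ 0) :
    pairRoot i i' m 0 = sroot i := by
  simp [pairRoot, div_self hs]

private lemma aux_pm1 (i i' : I) (m : ℕ) (hmfin : m ≠ 0) (hs : Real.sin (π / m) ≠ 0) :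
    pairRoot i i' m ((m : ℤ) - 1) = sroot i' := by
  have hmr : (m : ℝ) ≠ 0 := Nat.cast_ne_zero.mpr hmfin
  have e1 : (m : ℝ) * π / m = π := by field_simp
  have e2 : ((m : ℝ) - 1) * π / m = π - π / m := by field_simp
  simp [pairRoot, e1, e2, Real.sin_pi_sub, div_self hs]

variable {M : CoxeterMatrix I} {W : Type*} [Group W]

private lemma aux_keyi (cs : CoxeterSystem M W) (ρ : Representation ℝ W (I → ℝ))
    (B : LinearMap.BilinForm ℝ (I → ℝ)) (hgeom : IsGeometric cs ρ B)
    (i i' : I) (m : ℕ) (hm : M i i' = m) (hmfin : m ≠ 0) (k : ℤ) :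
    ρ (cs.simple i) (pairRoot i i' m k) = pairRoot i i' m ((m : ℤ) - k) := by
  have hBii : B (sroot i) (sroot i) = 1 := by
    have h := hgeom.form_apply_of_ne_zero i i (by rw [M.diagonal]; norm_num)
    rw [h, M.diagonal]; norm_num
  have hBi'i : B (sroot i') (sroot i) = - Real.cos (π / m) := by
    have h := hgeom.form_apply_of_ne_zero i' i
      (by rw [← M.symmetric i i', hm]; exact_mod_cast hmfin)
    rw [h, ← M.symmetric i i', hm]
  rw [hgeom.simple_apply]
  simp only [pairRoot, map_add, LinearMap.add_apply, map_smul, LinearMap.smul_apply,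
    smul_eq_mul, hBii, hBi'i, mul_one]
  rw [smul_comb_sub_left]
  congr 1
  · congr 1
    push_cast
    rw [trig1 m hmfin (k : ℝ), ← trig3 m (k : ℝ)]
    ring
  · congr 1
    push_cast
    rw [trig2 m hmfin (k : ℝ)]

private lemma aux_keyi' (cs : CoxeterSystem M W) (ρ : Representation ℝ W (I → ℝ))
    (B : LinearMap.BilinForm ℝ (I → ℝ)) (hgeom : IsGeometric cs ρ B)
    (i i' : I) (m : ℕ) (hm : M i i' = m) (hmfin : m ≠ 0) (k : ℤ) :
    ρ (cs.simple i') (pairRoot i i' m k) = pairRoot i i' m ((m : ℤ) - 2 - k) := by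
  have hBi'i' : B (sroot i') (sroot i') = 1 := by
    have h := hgeom.form_apply_of_ne_zero i' i' (by rw [M.diagonal]; norm_num)
    rw [h, M.diagonal]; norm_num
  have hBii' : B (sroot i) (sroot i') = - Real.cos (π / m) := by
    have h := hgeom.form_apply_of_ne_zero i i' (by rw [hm]; exact_mod_cast hmfin)
    rw [h, hm]
  rw [hgeom.simple_apply]
  simp only [pairRoot, map_add, LinearMap.add_apply, map_smul, LinearMap.smul_apply,
    smul_eq_mul, hBi'i', hBii', mul_one]
  rw [smul_comb_sub_right]
  congr 1
  · congr 1
    push_cast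
    rw [show ((m : ℝ) - 2 - (k : ℝ) + 1) * π / m = ((m : ℝ) - ((k : ℝ) + 1)) * π / m by ring,
      trig2 m hmfin ((k : ℝ) + 1)]
  · congr 1
    push_cast
    rw [show ((m : ℝ) - 2 - (k : ℝ)) * π / m = ((m : ℝ) - ((k : ℝ) + 2)) * π / m by ring,
      trig2 m hmfin ((k : ℝ) + 2), ← trig4 m (k : ℝ)]
    ring

private lemma aux_inj (i i' : I) (hne : i ≠ i') (m : ℕ) (hm2 : 2 ≤ m) :
    Set.InjOn (pairRoot (I := I) i i' m) (Set.Ico (0 : ℤ) (2 * m)) := by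
  have hmfin : m ≠ 0 := by omega
  have hmr : (m : ℝ) ≠ 0 := Nat.cast_ne_zero.mpr hmfin
  have hm1 : (1 : ℝ) < m := by exact_mod_cast hm2.trans_lt' (by norm_num)
  have hspos : 0 < Real.sin (π / m) :=
    Real.sin_pos_of_pos_of_lt_pi (by positivity) (div_lt_self Real.pi_pos hm1)
  have hs : Real.sin (π / m) ≠ 0 := hspos.ne'
  intro k hk k' hk' heq
  have e1 := congrFun heq i
  have e2 := congrFun heq i'
  simp only [pairRoot, Pi.add_apply, Pi.smul_apply, sroot, Pi.single_eq_same,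
    Pi.single_eq_of_ne hne.symm, Pi.single_eq_of_ne hne, smul_eq_mul, mul_one, mul_zero,
    add_zero, zero_add] at e1 e2
  have hsin : Real.sin ((k : ℝ) * π / m) = Real.sin ((k' : ℝ) * π / m) := by
    rw [div_left_inj' hs] at e2; exact e2
  have hsin1 : Real.sin (((k : ℝ) + 1) * π / m) = Real.sin (((k' : ℝ) + 1) * π / m) := by
    rw [div_left_inj' hs] at e1; exact e1
  have hcos : Real.cos ((k : ℝ) * π / m) = Real.cos ((k' : ℝ) * π / m) := by
    rw [show ((k : ℝ) + 1) * π / m = (k : ℝ) * π / m + π / m by ring,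
      show ((k' : ℝ) + 1) * π / m = (k' : ℝ) * π / m + π / m by ring,
      Real.sin_add, Real.sin_add, hsin] at hsin1
    have h := mul_right_cancel₀ hs (by linarith :
      Real.cos ((k : ℝ) * π / m) * Real.sin (π / m)
        = Real.cos ((k' : ℝ) * π / m) * Real.sin (π / m))
    exact h
  have hone : Real.cos (((k : ℝ) - k') * π / m) = 1 := by
    rw [show ((k : ℝ) - k') * π / m = (k : ℝ) * π / m - (k' : ℝ) * π / m by ring,
      Real.cos_sub, hsin, hcos]
    rw [← Real.sin_sq_add_cos_sq ((k' : ℝ) * π / m)]; ring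
  obtain ⟨n, hn⟩ := (Real.cos_eq_one_iff _).mp hone
  field_simp at hn
  have hreal : π * ((k : ℝ) - k') = π * (2 * n * m) := by linear_combination (-π) * hn
  have hR : (k : ℝ) - k' = 2 * n * m := mul_left_cancel₀ Real.pi_ne_zero hreal
  have hZ : k - k' = 2 * n * m := by exact_mod_cast hR
  rcases hk with ⟨hk1, hk2⟩
  rcases hk' with ⟨hk1', hk2'⟩
  have hmz : (2 : ℤ) ≤ (m : ℤ) := by exact_mod_cast hm2
  have hn0 : n = 0 := by
    by_contra h
    have h1 : 1 ≤ n ∨ n ≤ -1 := by omega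
    rcases h1 with h1 | h1
    · have : 2 * (m : ℤ) ≤ 2 * n * m := by nlinarith
      omega
    · have : 2 * n * m ≤ -(2 * (m : ℤ)) := by nlinarith
      omega
  rw [hn0] at hZ
  simp at hZ
  omega

end Aux

end BKBilliards

/-- For distinct `i, i'` with `m = m(i,i') < ∞`, the roots of the rank-2
parabolic subgroup `W_{{i,i'}}` are exactly the `2m` vectors `α_{i,i'}(k)`, `0 ≤ k < 2m`,
and `sᵢ α_{i,i'}(k) = α_{i,i'}(m-k)`, `sᵢ' α_{i,i'}(k) = α_{i,i'}(m-2-k)`. -/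
theorem rank_two_parabolic_roots
    {I : Type*} [Fintype I] [DecidableEq I] {M : CoxeterMatrix I} {W : Type*} [Group W]
    (cs : CoxeterSystem M W) (ρ : Representation ℝ W (I → ℝ))
    (B : LinearMap.BilinForm ℝ (I → ℝ)) (hgeom : IsGeometric cs ρ B)
    (i i' : I) (hne : i ≠ i') (m : ℕ) (hm : M i i' = m) (hmfin : m ≠ 0) :
    parabolicPairRoots cs ρ i i' = pairRoot i i' m '' Set.Ico (0 : ℤ) (2 * m) ∧
    Set.InjOn (pairRoot (I := I) i i' m) (Set.Ico (0 : ℤ) (2 * m)) ∧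
    (∀ k : ℤ, ρ (cs.simple i) (pairRoot i i' m k) = pairRoot i i' m ((m : ℤ) - k)) ∧
    (∀ k : ℤ, ρ (cs.simple i') (pairRoot i i' m k) = pairRoot i i' m ((m : ℤ) - 2 - k)) := by
  have hm1 : m ≠ 1 := by rintro rfl; exact M.off_diagonal i i' hne hm
  have hm2 : 2 ≤ m := by omega
  have hmr : (m : ℝ) ≠ 0 := Nat.cast_ne_zero.mpr hmfin
  have hm1' : (1 : ℝ) < m := by exact_mod_cast (by omega : 1 < m)
  have hs : Real.sin (Real.pi / m) ≠ 0 :=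
    (Real.sin_pos_of_pos_of_lt_pi (by positivity) (div_lt_self Real.pi_pos hm1')).ne'
  have keyi := aux_keyi cs ρ B hgeom i i' m hm hmfin
  have keyi' := aux_keyi' cs ρ B hgeom i i' m hm hmfin
  refine ⟨?_, aux_inj i i' hne m hm2, keyi, keyi'⟩
  -- every pairRoot value lies in the image over `Ico 0 (2m)`
  have mem_img : ∀ k : ℤ, pairRoot i i' m k ∈ pairRoot i i' m '' Set.Ico (0 : ℤ) (2 * m) := by
    intro k
    have h2m : (0 : ℤ) < 2 * (m : ℤ) := by omega
    refine ⟨k % (2 * (m : ℤ)), ⟨Int.emod_nonneg k (by omega), Int.emod_lt_of_pos k h2m⟩, ?_⟩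
    have hk : k % (2 * (m : ℤ)) + 2 * (m : ℤ) * (k / (2 * (m : ℤ))) = k :=
      Int.emod_add_mul_ediv k (2 * (m : ℤ))
    conv_rhs => rw [← hk]
    exact (aux_per i i' m hmfin _ _).symm
  set U : Set (I → ℝ) := Set.range (pairRoot i i' m) with hU
  have hmemU : ∀ k, pairRoot i i' m k ∈ U := fun k => ⟨k, rfl⟩
  have stab : ∀ w ∈ Subgroup.closure {cs.simple i, cs.simple i'}, ρ w '' U = U := by
    intro w hw
    induction hw using Subgroup.closure_induction with
    | mem x hx =>
      simp only [Set.mem_insert_iff, Set.mem_singleton_iff] at hx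
      rcases hx with rfl | rfl
      · apply Set.Subset.antisymm
        · rintro _ ⟨_, ⟨k, rfl⟩, rfl⟩
          rw [keyi k]; exact hmemU _
        · rintro _ ⟨k, rfl⟩
          refine ⟨pairRoot i i' m ((m : ℤ) - k), hmemU _, ?_⟩
          rw [keyi]; congr 1; ring
      · apply Set.Subset.antisymm
        · rintro _ ⟨_, ⟨k, rfl⟩, rfl⟩
          rw [keyi' k]; exact hmemU _
        · rintro _ ⟨k, rfl⟩
          refine ⟨pairRoot i i' m ((m : ℤ) - 2 - k), hmemU _, ?_⟩
          rw [keyi']; congr 1; ring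
    | one =>
      ext v
      simp [map_one]
    | mul x y hx hy px py =>
      rw [map_mul, Module.End.mul_eq_comp, LinearMap.coe_comp, Set.image_comp, py, px]
    | inv x hx px =>
      have hinv : (⇑(ρ x⁻¹) ∘ ⇑(ρ x)) = id := by
        funext v
        have h1 : ρ x⁻¹ * ρ x = 1 := by rw [← map_mul, inv_mul_cancel, map_one]
        calc ρ x⁻¹ (ρ x v) = (ρ x⁻¹ * ρ x) v := rfl
          _ = v := by rw [h1]; rfl
      conv_lhs => rw [← px]
      rw [← Set.image_comp, hinv, Set.image_id]
  have hsm : cs.simple i ∈ Subgroup.closure {cs.simple i, cs.simple i'} :=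
    Subgroup.subset_closure (by left; rfl)
  have hsm' : cs.simple i' ∈ Subgroup.closure {cs.simple i, cs.simple i'} :=
    Subgroup.subset_closure (by right; rfl)
  have hSi : ∀ v ∈ parabolicPairRoots cs ρ i i',
      ρ (cs.simple i) v ∈ parabolicPairRoots cs ρ i i' := by
    rintro v ⟨w, hw, j, hj, rfl⟩
    exact ⟨cs.simple i * w, mul_mem hsm hw, j, hj, by rw [map_mul]; rfl⟩
  have hSi' : ∀ v ∈ parabolicPairRoots cs ρ i i',
      ρ (cs.simple i') v ∈ parabolicPairRoots cs ρ i i' := by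
    rintro v ⟨w, hw, j, hj, rfl⟩
    exact ⟨cs.simple i' * w, mul_mem hsm' hw, j, hj, by rw [map_mul]; rfl⟩
  have base0 : pairRoot i i' m 0 ∈ parabolicPairRoots cs ρ i i' := by
    refine ⟨1, one_mem _, i, by left; rfl, ?_⟩
    rw [map_one, aux_p0 i i' m hs]; rfl
  have base1 : pairRoot i i' m ((m : ℤ) - 1) ∈ parabolicPairRoots cs ρ i i' := by
    refine ⟨1, one_mem _, i', by right; rfl, ?_⟩
    rw [map_one, aux_pm1 i i' m hmfin hs]; rfl
  have basem : pairRoot i i' m ((m : ℤ)) ∈ parabolicPairRoots cs ρ i i' := by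
    have h := hSi _ base0
    rw [keyi 0] at h
    simpa using h
  have stepup : ∀ k, pairRoot i i' m k ∈ parabolicPairRoots cs ρ i i' →
      pairRoot i i' m (k + 2) ∈ parabolicPairRoots cs ρ i i' := by
    intro k hk
    have h1 := hSi' _ hk
    rw [keyi'] at h1
    have h2 := hSi _ h1
    rw [keyi] at h2
    rwa [show (m : ℤ) - ((m : ℤ) - 2 - k) = k + 2 by ring] at h2
  have stepdown : ∀ k, pairRoot i i' m k ∈ parabolicPairRoots cs ρ i i' →
      pairRoot i i' m (k - 2) ∈ parabolicPairRoots cs ρ i i' := by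
    intro k hk
    have h1 := hSi _ hk
    rw [keyi] at h1
    have h2 := hSi' _ h1
    rw [keyi'] at h2
    rwa [show (m : ℤ) - 2 - ((m : ℤ) - k) = k - 2 by ring] at h2
  have hall : ∀ k₀, pairRoot i i' m k₀ ∈ parabolicPairRoots cs ρ i i' →
      ∀ n : ℤ, pairRoot i i' m (k₀ + 2 * n) ∈ parabolicPairRoots cs ρ i i' := by
    intro k₀ h n
    induction n using Int.induction_on with
    | zero => simpa using h
    | succ n ih =>
      rw [show k₀ + 2 * ((n : ℤ) + 1) = (k₀ + 2 * (n : ℤ)) + 2 by ring]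
      exact stepup _ ih
    | pred n ih =>
      rw [show k₀ + 2 * (-(n : ℤ) - 1) = (k₀ + 2 * (-(n : ℤ))) - 2 by ring]
      exact stepdown _ ih
  have hP : ∀ k, pairRoot i i' m k ∈ parabolicPairRoots cs ρ i i' := by
    intro k
    rcases Int.even_or_odd (k - (m : ℤ)) with ⟨n, hn⟩ | ⟨n, hn⟩
    · rw [show k = (m : ℤ) + 2 * n by omega]
      exact hall _ basem n
    · rw [show k = ((m : ℤ) - 1) + 2 * (n + 1) by omega]
      exact hall _ base1 (n + 1)
  apply Set.Subset.antisymm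
  · rintro v ⟨w, hw, j, hj, rfl⟩
    have hj' : sroot j ∈ U := by
      simp only [Set.mem_insert_iff, Set.mem_singleton_iff] at hj
      rcases hj with h | h
      · exact ⟨0, by rw [aux_p0 i i' m hs, h]⟩
      · exact ⟨(m : ℤ) - 1, by rw [aux_pm1 i i' m hmfin hs, h]⟩
    have hv : ρ w (sroot j) ∈ U := by
      rw [← stab w hw]
      exact ⟨sroot j, hj', rfl⟩
    obtain ⟨k, hk⟩ := hv
    rw [← hk]
    exact mem_img k
  · rintro _ ⟨k, hk, rfl⟩
    exact hP k
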